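/- Fix a real number $q$ with $0 < q < 1$ and an integer $N \ge 1$. Then the linear map $T_N : V_N \to V_{N-2}$ is injective, and the cokernel $V_{N-2}/\mathrm{Im}\, T_N$ has $\mathbb{C}$-dimension $N - 1$. -/

import Mathlib

/-- The `q`-integer `[n] = (qⁿ - q⁻ⁿ)/(q - q⁻¹)`. -/
noncomputable def qint (q : ℝ) (n : ℤ) : ℝ :=
  (q ^ n - q ^ (-n)) / (q - q⁻¹)

/-- The index set `S_N = {(a,b) : a ≥ |N|, a ≡ N (mod 2), |b| ≤ a, b ≡ a (mod 2)}`. -/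
def SN (N : ℤ) : Set (ℤ × ℤ) :=
  {p | |N| ≤ p.1 ∧ p.1 % 2 = N % 2 ∧ |p.2| ≤ p.1 ∧ p.2 % 2 = p.1 % 2}

/-- `V_N`: the `ℂ`-vector space of finitely supported functions on `S_N`, with standard
basis `(e_{a,b})`. -/
abbrev VN (N : ℤ) : Type :=
  SN N →₀ ℂ

/-- The coefficient `√([ (a-N)/2 + 1 ] [ (a+N)/2 ])` of the Dolbeault operator. -/
noncomputable def coeffT (q : ℝ) (N : ℤ) (p : ℤ × ℤ) : ℝ :=
  Real.sqrt (qint q ((p.1 - N) / 2 + 1) * qint q ((p.1 + N) / 2))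

/-- The anti-holomorphic Dolbeault operator `T_N : V_N → V_{N-2}`,
`T_N e_{a,b} = √([ (a-N)/2 + 1 ] [ (a+N)/2 ]) e_{a,b}` if `(a,b) ∈ S_{N-2}`, and `0`
otherwise. -/
noncomputable def TN (q : ℝ) (N : ℤ) : VN N →ₗ[ℂ] VN (N - 2) :=
  Finsupp.lsum ℂ fun p : SN N =>
    letI := Classical.dec ((p : ℤ × ℤ) ∈ SN (N - 2))
    if h : (p : ℤ × ℤ) ∈ SN (N - 2) then
      ((coeffT q N p : ℝ) : ℂ) • Finsupp.lsingle (⟨(p : ℤ × ℤ), h⟩ : SN (N - 2))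
    else 0

/-!
For `N ≥ 1` we have `S_N ⊆ S_{N-2}`, and `T_N` sends each basis vector `e_p` to `c_p e_p` with
`c_p > 0`, since for `p ∈ S_N` both `q`-integers under the square root have positive argument.
So `T_N` is a rescaling followed by extension by zero: it is injective, its image consists of the
functions supported on `S_N`, and its cokernel is the space of functions on
`S_{N-2} \ S_N = {(N-2, b) : |b| ≤ N-2, b ≡ N mod 2}`, a set with `N - 1` elements.
-/
namespace Finsupp

variable {R α β : Type*} [Semiring R] {ι : α → β} {c : α → Rˣ}
  {T : (α →₀ R) →ₗ[R] β →₀ R}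

theorem eq_lmapDomain_comp_unitsSMul_repr_symm
    (hT : ∀ a, T (single a 1) = c a • single (ι a) 1) :
    T = lmapDomain R R ι ∘ₗ (Finsupp.basisSingleOne.unitsSMul c).repr.symm.toLinearMap :=
  Finsupp.basisSingleOne.ext fun a => by
    simp [hT, Module.Basis.unitsSMul_apply]

theorem injective_of_map_single_eq_units_smul (hι : Function.Injective ι)
    (hT : ∀ a, T (single a 1) = c a • single (ι a) 1) : Function.Injective T := by
  rw [eq_lmapDomain_comp_unitsSMul_repr_symm hT]
  exact (mapDomain_injective hι).comp (LinearEquiv.injective _)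

theorem range_eq_supported_of_map_single_eq_units_smul
    (hT : ∀ a, T (single a 1) = c a • single (ι a) 1) :
    LinearMap.range T = supported R R (Set.range ι) := by
  rw [eq_lmapDomain_comp_unitsSMul_repr_symm hT,
    LinearMap.range_comp_of_range_eq_top _ (LinearEquiv.range _), range_lmapDomain,
    supported_eq_span_single, ← Set.range_comp]
  rfl

theorem isCompl_supported_compl (s : Set α) :
    IsCompl (supported R R s) (supported R R sᶜ) :=
  ⟨disjoint_supported_supported isCompl_compl.disjoint,
    codisjoint_supported_supported isCompl_compl.codisjoint⟩

theorem finrank_quotient_supported {R : Type*} [Ring R] [StrongRankCondition R] (s : Set α) :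
    Module.finrank R ((α →₀ R) ⧸ supported R R s) = Nat.card ↥sᶜ := by
  rw [((Submodule.quotientEquivOfIsCompl _ _ (isCompl_supported_compl s)).trans
    (supportedEquivFinsupp sᶜ)).finrank_eq, Module.finrank, rank_finsupp_self,
    Cardinal.toNat_lift]
  rfl

end Finsupp

theorem Set.natCard_compl_range_inclusion {α : Type*} {s t : Set α} (h : s ⊆ t) :
    Nat.card ↥(Set.range (Set.inclusion h))ᶜ = Nat.card ↥(t \ s) := by
  rw [Set.range_inclusion]
  exact Nat.card_congr (Equiv.subtypeSubtypeEquivSubtypeInter (· ∈ t) (· ∉ s))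

theorem qint_pos {q : ℝ} (hq0 : 0 < q) (hq1 : q < 1) {n : ℤ} (hn : 0 < n) : 0 < qint q n :=
  div_pos_of_neg_of_neg
    (sub_neg.2 ((zpow_lt_one₀ hq0 hq1 hn).trans
      (one_lt_zpow_of_neg₀ hq0 hq1 (neg_neg_of_pos hn))))
    (sub_neg.2 (hq1.trans ((one_lt_inv₀ hq0).2 hq1)))

theorem SN_subset {N : ℤ} (hN : 1 ≤ N) : SN N ⊆ SN (N - 2) := by
  intro p hp
  simp only [SN, Set.mem_ofPred_eq, abs_le] at hp ⊢
  omega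

theorem coeffT_pos {q : ℝ} (hq0 : 0 < q) (hq1 : q < 1) {N : ℤ} (hN : 1 ≤ N) {p : ℤ × ℤ}
    (hp : p ∈ SN N) : 0 < coeffT q N p := by
  simp only [SN, Set.mem_ofPred_eq, abs_le] at hp
  exact Real.sqrt_pos.2 (mul_pos (qint_pos hq0 hq1 (by omega)) (qint_pos hq0 hq1 (by omega)))

theorem TN_single (q : ℝ) {N : ℤ} (hN : 1 ≤ N) (p : SN N) :
    TN q N (Finsupp.single p 1) =
      ((coeffT q N p : ℝ) : ℂ) • Finsupp.single (Set.inclusion (SN_subset hN) p) 1 := by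
  simp [TN, dif_pos (SN_subset hN p.2), Set.inclusion]

theorem SN_sub_two_diff_SN {N : ℤ} (hN : 1 ≤ N) :
    SN (N - 2) \ SN N = (fun k : ℤ => (N - 2, 2 * k - (N - 2))) '' Set.Ico 0 (N - 1) := by
  ext ⟨a, b⟩
  simp only [SN, Set.mem_sdiff, Set.mem_ofPred_eq, Set.mem_image, Set.mem_Ico, Prod.mk.injEq,
    abs_le]
  constructor
  · rintro ⟨h, h'⟩
    exact ⟨(b + N - 2) / 2, by omega, by omega, by omega⟩
  · rintro ⟨k, hk, rfl, rfl⟩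
    omega

theorem natCard_SN_sub_two_diff_SN {N : ℤ} (hN : 1 ≤ N) :
    Nat.card ↥(SN (N - 2) \ SN N) = (N - 1).toNat := by
  have hinj : Function.Injective fun k : ℤ => (N - 2, 2 * k - (N - 2)) := fun k l h => by
    simpa using congrArg Prod.snd h
  rw [SN_sub_two_diff_SN hN, Nat.card_image_of_injective hinj]
  simp

/-- for `0 < q < 1` and an integer `N ≥ 1`, the map `T_N : V_N → V_{N-2}` is
injective and the cokernel `V_{N-2}/Im T_N` has `ℂ`-dimension `N - 1`. -/
theorem stmt8 (q : ℝ) (hq0 : 0 < q) (hq1 : q < 1) (N : ℤ) (hN : 1 ≤ N) :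
    Function.Injective (TN q N) ∧
    Module.finrank ℂ (VN (N - 2) ⧸ LinearMap.range (TN q N)) = (N - 1).toNat := by
  let c (p : SN N) : ℂˣ := Units.mk0 (coeffT q N p : ℂ) <| by
    exact_mod_cast (coeffT_pos hq0 hq1 hN p.2).ne'
  have hT (p : SN N) : TN q N (Finsupp.single p 1) =
      c p • Finsupp.single (Set.inclusion (SN_subset hN) p) 1 :=
    TN_single q hN p
  refine ⟨Finsupp.injective_of_map_single_eq_units_smul (Set.inclusion_injective _) hT, ?_⟩
  rw [Finsupp.range_eq_supported_of_map_single_eq_units_smul hT,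
    Finsupp.finrank_quotient_supported, Set.natCard_compl_range_inclusion,
    natCard_SN_sub_two_diff_SN hN]
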